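/- arXiv:1901.05843 — 2 statements merged into one kernel-verified Lean document; each statement's English description precedes it below -/
import Mathlib

section
/- Let (a_n) be a sequence of positive real numbers and K ≥ 1 an integer. Suppose that for all sufficiently large n, a_n/a_{n+1} = 1 + 1/n + (1/n)·∑_{i=1}^{K} 1/(∏_{k=1}^{i} ln_{(k)} n) + R_n, where for some constants c > 0 and 0 ≤ r < 1 the remainder satisfies R_n ≥ c/(n·(ln_{(K+1)} n)^r·∏_{k=1}^{K} ln_{(k)} n) for all sufficiently large n. Then the series ∑_{n=1}^∞ a_n converges. -/
/-!
Compare `a` with the telescoping series of `b n = G n - G (n + 1)`, where `G x = 1 / ln_{(K+1)} x`.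
We have `-G' = exp ∘ φ` (`φ = logDensity K`) and `-φ' = h` (`h = logRate K`), where
`h x = 1/x + ∑_{i=1}^{K} 1/(x ln x ⋯ ln_{(i)} x) + 2/(x ln x ⋯ ln_{(K+1)} x)` decreases,
so Cauchy's mean value theorem gives `b n / b (n + 1) ≤ exp (h n) ≤ 1 + h n + (h n)²`. Both
`2/(n ln n ⋯ ln_{(K+1)} n)` and `(h n)² = O(1/n²)` are
`o(1/(n (ln_{(K+1)} n)^r ln n ⋯ ln_{(K)} n))` because `r < 1`, so the lower bound on `R n`
makes this at most `a n / a (n + 1)` eventually.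
Hence `a n / b n` is eventually decreasing, and `a = O(b)`.
-/

open Filter Real Finset Topology

namespace Real

theorem tendsto_iterate_log_atTop (k : ℕ) : Tendsto log^[k] atTop atTop := by
  induction k with
  | zero => exact tendsto_id
  | succ k ih => simpa only [Function.iterate_succ'] using tendsto_log_atTop.comp ih

theorem eventually_one_le_iterate_log (m : ℕ) : ∀ᶠ x in atTop, ∀ j ≤ m, 1 ≤ log^[j] x :=
  (eventually_all_finite (Set.finite_le_nat m)).2 fun j _ =>
    (tendsto_iterate_log_atTop j).eventually_ge_atTop 1

theorem iterate_log_le_self {k : ℕ} {x : ℝ} (hx : ∀ j < k, 0 ≤ log^[j] x) :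
    log^[k] x ≤ x := by
  induction k with
  | zero => rfl
  | succ k ih =>
    rw [Function.iterate_succ_apply']
    exact (log_le_self (hx k k.lt_succ_self)).trans (ih fun j hj => hx j (by omega))

theorem iterate_log_le_iterate_log {k : ℕ} {x y : ℝ} (hx : ∀ j < k, 0 < log^[j] x)
    (hxy : x ≤ y) : log^[k] x ≤ log^[k] y := by
  induction k with
  | zero => exact hxy
  | succ k ih =>
    simp only [Function.iterate_succ_apply']
    exact log_le_log (hx k k.lt_succ_self) (ih fun j hj => hx j (by omega))

end Real

theorem summable_sub_succ_of_tendsto {G : ℕ → ℝ} {l : ℝ} (hG : Tendsto G atTop (𝓝 l))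
    (hanti : ∀ᶠ n in atTop, G (n + 1) ≤ G n) : Summable fun n => G n - G (n + 1) := by
  obtain ⟨N, hN⟩ := eventually_atTop.1 hanti
  have hGN : AntitoneOn G {n | N ≤ n} := antitoneOn_nat_Ici_of_succ_le hN
  have hl : ∀ n ≥ N, l ≤ G n := fun n hn =>
    le_of_tendsto hG (eventually_atTop.2 ⟨n, fun m hm => hGN hn (hn.trans hm) hm⟩)
  refine (summable_nat_add_iff N).1 <|
    summable_of_sum_range_le (c := G N - l) (fun m => ?_) fun m => ?_
  · simpa only [add_right_comm, sub_nonneg] using hN (m + N) (by omega)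
  · simp only [add_right_comm _ N 1]
    rw [sum_range_sub' (fun i => G (i + N)), zero_add]
    linarith [hl (m + N) (by omega)]

theorem summable_of_eventually_div_le_div {a b : ℕ → ℝ} (hb : Summable b)
    (hpos : ∀ᶠ n in atTop, 0 < a n ∧ 0 < b n)
    (hratio : ∀ᶠ n in atTop, b n / b (n + 1) ≤ a n / a (n + 1)) : Summable a := by
  obtain ⟨N, hN⟩ := eventually_atTop.1 (hpos.and hratio)
  have hanti : AntitoneOn (fun n => a n / b n) {n | N ≤ n} := by
    refine antitoneOn_nat_Ici_of_succ_le fun n hn => ?_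
    obtain ⟨⟨-, hbn⟩, h⟩ := hN n hn
    obtain ⟨⟨han', hbn'⟩, -⟩ := hN (n + 1) (by omega)
    rw [div_le_div_iff₀ hbn' hbn]
    rw [div_le_div_iff₀ hbn' han'] at h
    linarith
  refine hb.mul_left (a N / b N) |>.of_norm_bounded_eventually_nat ?_
  filter_upwards [eventually_ge_atTop N] with n hn
  obtain ⟨⟨han, hbn⟩, -⟩ := hN n hn
  rw [norm_of_nonneg han.le, ← div_le_iff₀ hbn]
  exact hanti (le_refl N) hn hn

theorem strictAntiOn_Ici_of_hasDerivAt {G g : ℝ → ℝ} {t : ℝ}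
    (hG : ∀ x ≥ t, HasDerivAt G (-g x) x) (hg : ∀ x ≥ t, 0 < g x) :
    StrictAntiOn G (Set.Ici t) := by
  refine strictAntiOn_of_hasDerivWithinAt_neg (f' := fun x => -g x) (convex_Ici t)
    (fun x hx => (hG x hx).continuousAt.continuousWithinAt) (fun x hx => ?_) fun x hx => ?_
  all_goals rw [interior_Ici] at hx
  · exact (hG x (le_of_lt hx)).hasDerivWithinAt
  · exact neg_neg_of_pos (hg x (le_of_lt hx))

theorem sub_le_mul_sub_of_hasDerivAt {G g : ℝ → ℝ} {t M : ℝ}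
    (hG : ∀ x ≥ t, HasDerivAt G (-g x) x) (hg : ∀ x ≥ t, 0 < g x)
    (hgM : ∀ x ≥ t, g x ≤ M * g (x + 1)) :
    G t - G (t + 1) ≤ M * (G (t + 1) - G (t + 2)) := by
  -- Cauchy's mean value theorem for `G` and its translate `G (· + 1)` on `[t, t + 1]`.
  have hG₁ : ∀ x ≥ t, HasDerivAt (fun y => G (y + 1)) (-g (x + 1)) x :=
    fun x hx => (hG (x + 1) (by linarith)).comp_add_const x 1
  obtain ⟨ξ, hξ, hcauchy⟩ := exists_ratio_hasDerivAt_eq_ratio_slope G (fun x => -g x)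
    (lt_add_one t) (fun x hx => (hG x hx.1).continuousAt.continuousWithinAt)
    (fun x hx => hG x hx.1.le) (fun x => G (x + 1)) (fun x => -g (x + 1))
    (fun x hx => (hG₁ x hx.1).continuousAt.continuousWithinAt) (fun x hx => hG₁ x hx.1.le)
  have hdecr : 0 ≤ G (t + 1) - G (t + 2) := sub_nonneg.2 <|
    (strictAntiOn_Ici_of_hasDerivAt hG hg).antitoneOn (Set.mem_Ici.2 (by linarith))
      (Set.mem_Ici.2 (by linarith)) (by linarith)
  have hξ1 := hg (ξ + 1) (by linarith [hξ.1])
  rw [show t + 1 + 1 = t + 2 by ring] at hcauchy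
  refine le_of_mul_le_mul_right ?_ hξ1
  calc (G t - G (t + 1)) * g (ξ + 1) = (G (t + 1) - G (t + 2)) * g ξ := by linarith
    _ ≤ (G (t + 1) - G (t + 2)) * (M * g (ξ + 1)) :=
      mul_le_mul_of_nonneg_left (hgM ξ hξ.1.le) hdecr
    _ = M * (G (t + 1) - G (t + 2)) * g (ξ + 1) := by ring

noncomputable def logProd (i : ℕ) (x : ℝ) : ℝ := ∏ k ∈ Icc 1 i, log^[k] x

section logProd

variable {i : ℕ} {x y : ℝ}

theorem logProd_succ (i : ℕ) (x : ℝ) : logProd (i + 1) x = logProd i x * log^[i + 1] x :=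
  prod_Icc_succ_top (by omega) _

theorem logProd_pos (hx : ∀ j ≤ i, 0 < log^[j] x) : 0 < logProd i x :=
  prod_pos fun k hk => hx k (mem_Icc.1 hk).2

theorem one_le_logProd (hx : ∀ j ≤ i, 1 ≤ log^[j] x) : 1 ≤ logProd i x :=
  one_le_prod fun k hk => hx k (mem_Icc.1 hk).2

theorem logProd_le_logProd (hx : ∀ j ≤ i, 0 < log^[j] x) (hxy : x ≤ y) :
    logProd i x ≤ logProd i y :=
  prod_le_prod (fun k hk => (hx k (mem_Icc.1 hk).2).le) fun k hk =>
    iterate_log_le_iterate_log (fun j hj => hx j (by grind)) hxy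

theorem logProd_le_log_pow (hx : ∀ j ≤ i, 0 < log^[j] x) : logProd i x ≤ log x ^ i := by
  refine (prod_le_prod (fun k hk => (hx k (mem_Icc.1 hk).2).le) fun k hk => ?_).trans_eq
    (by rw [prod_const, Nat.card_Icc, Nat.add_sub_cancel])
  obtain ⟨k, rfl⟩ := Nat.exists_eq_add_of_le' (mem_Icc.1 hk).1
  rw [Function.iterate_succ_apply]
  exact iterate_log_le_self fun j hj => by
    rw [← Function.iterate_succ_apply]; exact (hx (j + 1) (by grind)).le

theorem hasDerivAt_iterate_log (hx : ∀ j ≤ i, 0 < log^[j] x) :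
    HasDerivAt log^[i + 1] (x * logProd i x)⁻¹ x := by
  induction i with
  | zero => simpa [logProd] using hasDerivAt_log (hx 0 le_rfl).ne'
  | succ i ih =>
    rw [Function.iterate_succ']
    refine ((hasDerivAt_log (hx (i + 1) le_rfl).ne').comp x
      (ih fun j hj => hx j (by omega))).congr_deriv ?_
    rw [logProd_succ, Function.iterate_succ_apply']
    ring

theorem inv_mul_logProd_pos (hx : ∀ j ≤ i, 0 < log^[j] x) : 0 < (x * logProd i x)⁻¹ :=
  inv_pos.2 (mul_pos (hx 0 (by omega)) (logProd_pos hx))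

theorem inv_mul_logProd_le_inv_mul_logProd (hx : ∀ j ≤ i, 0 < log^[j] x) (hxy : x ≤ y) :
    (y * logProd i y)⁻¹ ≤ (x * logProd i x)⁻¹ :=
  inv_anti₀ (mul_pos (hx 0 (by omega)) (logProd_pos hx))
    (mul_le_mul hxy (logProd_le_logProd hx hxy) (logProd_pos hx).le
      ((hx 0 (Nat.zero_le _)).le.trans hxy))

theorem inv_mul_logProd_le_inv (hx : ∀ j ≤ i, 1 ≤ log^[j] x) :
    (x * logProd i x)⁻¹ ≤ x⁻¹ :=
  have hx0 : 0 < x := zero_lt_one.trans_le (hx 0 (by omega))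
  inv_anti₀ hx0 (le_mul_of_one_le_right hx0.le (one_le_logProd hx))

end logProd

noncomputable def logDensity (K : ℕ) (x : ℝ) : ℝ :=
  -log x - ∑ i ∈ Icc 1 K, log^[i + 1] x - 2 * log^[K + 2] x

noncomputable def logRate (K : ℕ) (x : ℝ) : ℝ :=
  x⁻¹ + ∑ i ∈ Icc 1 K, (x * logProd i x)⁻¹ + 2 * (x * logProd (K + 1) x)⁻¹

section logDensity

variable {K : ℕ} {x y : ℝ}

theorem exp_logDensity (hx : ∀ j ≤ K + 1, 0 < log^[j] x) :
    exp (logDensity K x) = (x * logProd K x * (log^[K + 1] x) ^ 2)⁻¹ := by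
  have hexp : ∀ j ≤ K + 1, exp (log^[j + 1] x) = log^[j] x := fun j hj => by
    rw [Function.iterate_succ_apply', exp_log (hx j hj)]
  have hsum : exp (∑ i ∈ Icc 1 K, log^[i + 1] x) = logProd K x := by
    rw [exp_sum]; exact prod_congr rfl fun i hi => hexp i (by grind)
  have hsq : exp (2 * log^[K + 2] x) = log^[K + 1] x ^ 2 := by
    rw [← hexp (K + 1) le_rfl, ← exp_nat_mul]; norm_num
  rw [logDensity, exp_sub, exp_sub, hsum, hsq, exp_neg, exp_log (show 0 < x from hx 0 (by omega))]
  field_simp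

theorem hasDerivAt_logDensity (hx : ∀ j ≤ K + 1, 0 < log^[j] x) :
    HasDerivAt (logDensity K) (-logRate K x) x := by
  have hsum : HasDerivAt (fun y => ∑ i ∈ Icc 1 K, log^[i + 1] y)
      (∑ i ∈ Icc 1 K, (x * logProd i x)⁻¹) x :=
    HasDerivAt.fun_sum fun i hi => hasDerivAt_iterate_log fun j hj => hx j (by grind)
  refine ((((hasDerivAt_log (hx 0 (by omega)).ne').neg.sub hsum).sub
    ((hasDerivAt_iterate_log hx).const_mul 2))).congr_deriv ?_
  rw [logRate, Function.iterate_zero_apply]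
  ring

theorem hasDerivAt_inv_iterate_log (hx : ∀ j ≤ K + 1, 0 < log^[j] x) :
    HasDerivAt (fun y => (log^[K + 1] y)⁻¹) (-exp (logDensity K x)) x := by
  refine ((hasDerivAt_iterate_log fun j hj => hx j (by omega)).inv
    (hx (K + 1) le_rfl).ne').congr_deriv ?_
  rw [exp_logDensity hx]
  field_simp

theorem logRate_nonneg (hx : ∀ j ≤ K + 1, 0 < log^[j] x) : 0 ≤ logRate K x := by
  have hx0 : 0 < x := hx 0 (by omega)
  have := inv_mul_logProd_pos hx
  have := sum_nonneg fun i (hi : i ∈ Icc 1 K) =>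
    (inv_mul_logProd_pos (i := i) fun j hj => hx j (by grind)).le
  unfold logRate
  positivity

theorem logRate_le_logRate (hx : ∀ j ≤ K + 1, 0 < log^[j] x) (hxy : x ≤ y) :
    logRate K y ≤ logRate K x := by
  unfold logRate
  gcongr ?_ + ∑ i ∈ _, ?_ + 2 * ?_ with i hi
  · exact inv_anti₀ (hx 0 (by omega)) hxy
  · exact inv_mul_logProd_le_inv_mul_logProd (i := i) (fun j hj => hx j (by grind)) hxy
  · exact inv_mul_logProd_le_inv_mul_logProd hx hxy

theorem logRate_le (hx : ∀ j ≤ K + 1, 1 ≤ log^[j] x) : logRate K x ≤ (K + 3) / x := calc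
  logRate K x ≤ x⁻¹ + ∑ i ∈ Icc 1 K, x⁻¹ + 2 * x⁻¹ := by
    unfold logRate
    gcongr x⁻¹ + ∑ i ∈ _, ?_ + 2 * ?_ with i hi
    · exact inv_mul_logProd_le_inv fun j hj => hx j (by grind)
    · exact inv_mul_logProd_le_inv hx
  _ = (K + 3) / x := by
    rw [sum_const, Nat.card_Icc, nsmul_eq_mul]
    push_cast
    ring

end logDensity

theorem eventually_inv_iterate_log_sub_le (K : ℕ) :
    ∀ᶠ t in atTop, StrictAntiOn (fun y => (log^[K + 1] y)⁻¹) (Set.Ici t) ∧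
      (log^[K + 1] t)⁻¹ - (log^[K + 1] (t + 1))⁻¹ ≤
        exp (logRate K t) * ((log^[K + 1] (t + 1))⁻¹ - (log^[K + 1] (t + 2))⁻¹) := by
  obtain ⟨X, hX⟩ := eventually_atTop.1 (eventually_one_le_iterate_log (K + 1))
  have hpos : ∀ x ≥ X, ∀ j ≤ K + 1, 0 < log^[j] x := fun x hx j hj =>
    zero_lt_one.trans_le (hX x hx j hj)
  filter_upwards [eventually_ge_atTop X] with t ht
  have hG : ∀ x ≥ t, HasDerivAt (fun y => (log^[K + 1] y)⁻¹) (-exp (logDensity K x)) x :=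
    fun x hx => hasDerivAt_inv_iterate_log (hpos x (ht.trans hx))
  refine ⟨strictAntiOn_Ici_of_hasDerivAt hG fun x _ => exp_pos _,
    sub_le_mul_sub_of_hasDerivAt hG (fun x _ => exp_pos _) fun x hx => ?_⟩
  have hφ : ∀ y ≥ t, HasDerivAt (logDensity K) (-logRate K y) y :=
    fun y hy => hasDerivAt_logDensity (hpos y (ht.trans hy))
  have hslope : -logRate K t * (x + 1 - x) ≤ logDensity K (x + 1) - logDensity K x :=
    (convex_Ici t).mul_sub_le_image_sub_of_le_deriv
      (fun y hy => (hφ y hy).continuousAt.continuousWithinAt)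
      (fun y hy => (hφ y (interior_subset hy)).differentiableAt.differentiableWithinAt)
      (fun y hy => by
        rw [(hφ y (interior_subset hy)).deriv, neg_le_neg_iff]
        exact logRate_le_logRate (hpos t ht) (interior_subset hy))
      x hx (x + 1) (by simp only [Set.mem_Ici]; linarith) (by linarith)
  rw [← exp_add, exp_le_exp]
  linarith

theorem tendsto_logRate_atTop (K : ℕ) : Tendsto (logRate K) atTop (𝓝 0) := by
  refine squeeze_zero' ?_ ?_ ((tendsto_const_nhds (x := (K + 3 : ℝ))).div_atTop tendsto_id)
  · filter_upwards [eventually_one_le_iterate_log (K + 1)] with x hx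
    exact logRate_nonneg fun j hj => zero_lt_one.trans_le (hx j hj)
  · filter_upwards [eventually_one_le_iterate_log (K + 1)] with x hx
    exact logRate_le hx

theorem tendsto_rpow_iterate_log_mul_logProd_div (K : ℕ) {r : ℝ} (hr : r ≤ 1) :
    Tendsto (fun x => log^[K + 1] x ^ r * logProd K x / x) atTop (𝓝 0) := by
  have hlog := tendsto_pow_log_div_mul_add_atTop 1 0 (K + 1) one_ne_zero
  simp only [one_mul, add_zero] at hlog
  refine squeeze_zero' ?_ ?_ hlog
  · filter_upwards [eventually_one_le_iterate_log (K + 1)] with x hx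
    have := logProd_pos (i := K) fun j hj => zero_lt_one.trans_le (hx j (by omega))
    have := hx 0 (by omega)
    have := hx (K + 1) le_rfl
    positivity
  · filter_upwards [eventually_one_le_iterate_log (K + 1)] with x hx
    have hpos : ∀ j ≤ K + 1, 0 < log^[j] x := fun j hj => zero_lt_one.trans_le (hx j hj)
    have hL : log^[K + 1] x ^ r ≤ log x := calc
      log^[K + 1] x ^ r ≤ log^[K + 1] x := rpow_le_self_of_one_le (hx (K + 1) le_rfl) hr
      _ ≤ log x := by
        rw [Function.iterate_succ_apply]
        exact iterate_log_le_self fun j hj => by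
          rw [← Function.iterate_succ_apply]; exact (hpos (j + 1) (by omega)).le
    gcongr
    · exact (hpos 0 (by omega)).le
    · calc log^[K + 1] x ^ r * logProd K x ≤ log x * log x ^ K :=
          mul_le_mul hL (logProd_le_log_pow fun j hj => hpos j (by omega))
            (logProd_pos fun j hj => hpos j (by omega)).le (hpos 1 (by omega)).le
        _ = log x ^ (K + 1) := by ring

theorem eventually_two_mul_inv_add_logRate_sq_le (K : ℕ) {c r : ℝ} (hc : 0 < c) (hr : r < 1) :
    ∀ᶠ x in atTop, 2 * (x * logProd (K + 1) x)⁻¹ + logRate K x ^ 2 ≤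
      c / (x * log^[K + 1] x ^ r * logProd K x) := by
  have hsmall : Tendsto (fun x => 2 * log^[K + 1] x ^ (r - 1) +
      (K + 3) ^ 2 * (log^[K + 1] x ^ r * logProd K x / x)) atTop (𝓝 0) := by
    have h1 : Tendsto (fun x => log^[K + 1] x ^ (r - 1)) atTop (𝓝 0) := by
      simpa only [neg_sub, Function.comp_def] using
        (tendsto_rpow_neg_atTop (sub_pos.2 hr)).comp (tendsto_iterate_log_atTop (K + 1))
    simpa using (h1.const_mul 2).add
      ((tendsto_rpow_iterate_log_mul_logProd_div K hr.le).const_mul (((K : ℝ) + 3) ^ 2))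
  filter_upwards [(tendsto_order.1 hsmall).2 c hc, eventually_one_le_iterate_log (K + 1)]
    with x hsmall hx
  have hpos : ∀ j ≤ K + 1, 0 < log^[j] x := fun j hj => zero_lt_one.trans_le (hx j hj)
  have hx0 : 0 < x := hpos 0 (by omega)
  have hL : 0 < log^[K + 1] x := hpos (K + 1) le_rfl
  have hP : 0 < logProd K x := logProd_pos fun j hj => hpos j (by omega)
  have hLr : 0 < log^[K + 1] x ^ r := rpow_pos_of_pos hL r
  have h1 : 2 * (x * logProd (K + 1) x)⁻¹ =
      2 * log^[K + 1] x ^ (r - 1) / (x * log^[K + 1] x ^ r * logProd K x) := by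
    rw [logProd_succ, rpow_sub_one hL.ne']
    field_simp
  have h2 : logRate K x ^ 2 ≤
      (K + 3) ^ 2 * (log^[K + 1] x ^ r * logProd K x / x) / (x * log^[K + 1] x ^ r * logProd K x) :=
    calc logRate K x ^ 2 ≤ ((K + 3) / x) ^ 2 :=
        pow_le_pow_left₀ (logRate_nonneg hpos) (logRate_le hx) 2
      _ = _ := by field_simp
  rw [h1]
  calc _ ≤ (2 * log^[K + 1] x ^ (r - 1) + (K + 3) ^ 2 * (log^[K + 1] x ^ r * logProd K x / x)) /
        (x * log^[K + 1] x ^ r * logProd K x) := by rw [add_div]; gcongr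
    _ ≤ _ := by gcongr

theorem logRate_eq (K : ℕ) (x : ℝ) :
    logRate K x = 1 / x + 1 / x * ∑ i ∈ Icc 1 K, 1 / ∏ k ∈ Icc 1 i, log^[k] x +
      2 * (x * logProd (K + 1) x)⁻¹ := by
  simp only [logRate, logProd, mul_sum, one_div, mul_inv]

theorem eventually_exp_logRate_le (K : ℕ) :
    ∀ᶠ x in atTop, exp (logRate K x) ≤ 1 + logRate K x + logRate K x ^ 2 := by
  filter_upwards [(tendsto_logRate_atTop K).eventually (Metric.closedBall_mem_nhds 0 one_pos)]
    with x hx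
  have := abs_exp_sub_one_sub_id_le (norm_eq_abs _ ▸ mem_closedBall_zero_iff.1 hx)
  linarith [(abs_le.1 this).2]

theorem summable_of_eventually_exp_logRate_le (K : ℕ) {a : ℕ → ℝ}
    (ha : ∀ᶠ n in atTop, 0 < a n)
    (hratio : ∀ᶠ n : ℕ in atTop, exp (logRate K n) ≤ a n / a (n + 1)) : Summable a := by
  set G : ℝ → ℝ := fun x => (log^[K + 1] x)⁻¹
  set b : ℕ → ℝ := fun n => G n - G (n + 1 : ℕ)
  have hnat := tendsto_natCast_atTop_atTop (R := ℝ)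
  have htail := hnat.eventually (eventually_inv_iterate_log_sub_le K)
  have hb_pos : ∀ᶠ n in atTop, 0 < b n ∧ 0 < b (n + 1) := by
    filter_upwards [htail] with n hn
    simp only [b, sub_pos]
    push_cast [add_assoc, one_add_one_eq_two]
    exact ⟨hn.1 Set.self_mem_Ici (by simp) (by simp), hn.1 (by simp) (by simp) (by simp)⟩
  have hb : Summable b :=
    summable_sub_succ_of_tendsto
      ((tendsto_inv_atTop_zero.comp (tendsto_iterate_log_atTop (K + 1))).comp hnat)
      (hb_pos.mono fun n hn => (sub_pos.1 hn.1).le)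
  refine summable_of_eventually_div_le_div hb ?_ ?_
  · filter_upwards [ha, hb_pos] with n han hn using ⟨han, hn.1⟩
  filter_upwards [htail, hb_pos, hratio] with n htail hb_pos hratio
  rw [div_le_iff₀ hb_pos.2]
  have hb_next := hb_pos.2.le
  simp only [b] at hb_next ⊢
  push_cast [add_assoc, one_add_one_eq_two] at hb_next ⊢
  exact htail.2.trans (mul_le_mul_of_nonneg_right hratio hb_next)

theorem extended_test_remainder_convergence_general
    (a : ℕ → ℝ) (ha : ∀ n, 0 < a n) (K : ℕ) (R : ℕ → ℝ)
    (hratio : ∀ᶠ n : ℕ in Filter.atTop,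
      a n / a (n + 1) =
        1 + 1 / (n : ℝ)
          + (1 / (n : ℝ)) * ∑ i ∈ Finset.Icc 1 K,
              1 / ∏ k ∈ Finset.Icc 1 i, Real.log^[k] (n : ℝ)
          + R n)
    (c : ℝ) (hc : 0 < c) (r : ℝ) (hr1 : r < 1)
    (hR : ∀ᶠ n : ℕ in Filter.atTop,
      R n ≥ c / ((n : ℝ) * (Real.log^[K + 1] (n : ℝ)) ^ r *
        ∏ k ∈ Finset.Icc 1 K, Real.log^[k] (n : ℝ))) :
    Summable a := by
  have hnat := tendsto_natCast_atTop_atTop (R := ℝ)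
  refine summable_of_eventually_exp_logRate_le K (.of_forall ha) ?_
  filter_upwards [hratio, hR, hnat.eventually (eventually_exp_logRate_le K),
    hnat.eventually (eventually_two_mul_inv_add_logRate_sq_le K hc hr1)]
    with n hratio hR hexp hsmall
  have hrate := logRate_eq K n
  simp only [logProd] at hrate hsmall
  rw [hratio]
  linarith

/-- If `a_n / a_{n+1} = 1 + 1/n + (1/n)·∑_{i=1}^{K} 1/∏_{k=1}^{i} ln_{(k)} n + R_n`
with `R_n ≥ c/(n · (ln_{(K+1)} n)^r · ∏_{k=1}^{K} ln_{(k)} n)` eventually, for some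
`c > 0` and `0 ≤ r < 1`, then `∑ a_n` converges.
Here `Real.log^[k]` is the `k`-th iterate of `Real.log`. -/
theorem extended_test_remainder_convergence
    (a : ℕ → ℝ) (ha : ∀ n, 0 < a n) (K : ℕ) (hK : 1 ≤ K) (R : ℕ → ℝ)
    (hratio : ∀ᶠ n : ℕ in Filter.atTop,
      a n / a (n + 1) =
        1 + 1 / (n : ℝ)
          + (1 / (n : ℝ)) * ∑ i ∈ Finset.Icc 1 K,
              1 / ∏ k ∈ Finset.Icc 1 i, Real.log^[k] (n : ℝ)
          + R n)
    (c : ℝ) (hc : 0 < c) (r : ℝ) (hr0 : 0 ≤ r) (hr1 : r < 1)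
    (hR : ∀ᶠ n : ℕ in Filter.atTop,
      R n ≥ c / ((n : ℝ) * (Real.log^[K + 1] (n : ℝ)) ^ r *
        ∏ k ∈ Finset.Icc 1 K, Real.log^[k] (n : ℝ))) :
    Summable a :=
  extended_test_remainder_convergence_general a ha K R hratio c hc r hr1 hR
end

section
/- (Series form of the recurrence criterion for birth-and-death processes.) Let (λ_n) and (μ_n) be sequences of real numbers in (0, ∞), and suppose there exist an integer K ≥ 1 and an index n_0 such that for all n > n_0, λ_n/μ_n ≤ 1 + 1/n + (1/n)·∑_{i=1}^{K} 1/(∏_{j=1}^{i} ln_{(j)} n). Then the series ∑_{n=1}^∞ ∏_{k=1}^{n} (μ_k/λ_k) diverges, i.e. ∑_{n=1}^∞ ∏_{k=1}^{n} (μ_k/λ_k) = ∞ (equivalently, by Karlin–McGregor's criterion, the birth-and-death process with birth rates λ_n and death rates μ_n is recurrent). -/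
/-!
Write `Lⱼ = log^[j]` and `Qᵢ = L₀ L₁ ⋯ Lᵢ`, so that `L_{i+1}' = 1 / Qᵢ`. From
`(b - a) / b ≤ log b - log a ≤ (b - a) / a`, induction on `i` gives the discrete version
`1 / Qᵢ(x + 1) ≤ L_{i+1}(x + 1) - L_{i+1}(x) ≤ 1 / Qᵢ(x)`.

The hypothesis reads `λₙ / μₙ ≤ 1 + φ(n)` with `φ = ∑_{i ≤ K} 1 / Qᵢ`. As
`log Q_K = ∑_{i ≤ K} L_{i+1}`, the potential `V = log Q_K - φ` satisfies
`log (λₙ / μₙ) ≤ φ(n) ≤ V(n + 1) - V(n)`. Telescoping gives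
`∏_{k ≤ n} μₖ/λₖ ≥ c e^{-V(n+1)} ≥ c / Q_K(n+1) ≥ c (L_{K+1}(n+2) - L_{K+1}(n+1))`,
and these increments have divergent sum because `L_{K+1} → ∞`.
-/

open Real Filter Finset

@[to_additive sum_Icc_one_eq_sum_range]
lemma prod_Icc_one_eq_prod_range {M : Type*} [CommMonoid M] (f : ℕ → M) (n : ℕ) :
    ∏ j ∈ Icc 1 n, f j = ∏ j ∈ range n, f (j + 1) := by
  rw [range_eq_Ico, prod_Ico_add', ← Ico_add_one_right_eq_Icc]

lemma sub_div_le_log_sub_log {a b : ℝ} (ha : 0 < a) (hb : 0 < b) :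
    (b - a) / b ≤ log b - log a := by
  have := one_sub_inv_le_log_of_pos (div_pos hb ha)
  rwa [log_div hb.ne' ha.ne', inv_div, one_sub_div hb.ne'] at this

lemma log_sub_log_le_sub_div {a b : ℝ} (ha : 0 < a) (hb : 0 < b) :
    log b - log a ≤ (b - a) / a := by
  have := log_le_sub_one_of_pos (div_pos hb ha)
  rwa [log_div hb.ne' ha.ne', div_sub_one ha.ne'] at this

lemma eventually_forall_le_iterate_log_pos (m : ℕ) :
    ∀ᶠ x in atTop, ∀ j ≤ m, 0 < log^[j] x :=
  (eventually_all_finite (Set.finite_Iic m)).2 fun j _ =>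
    (tendsto_log_atTop.iterate j).eventually_gt_atTop 0

noncomputable def iterLogProd (i : ℕ) (x : ℝ) : ℝ :=
  ∏ j ∈ range (i + 1), log^[j] x

lemma iterLogProd_succ (i : ℕ) (x : ℝ) :
    iterLogProd (i + 1) x = iterLogProd i x * log^[i + 1] x :=
  prod_range_succ _ _

lemma iterLogProd_pos {i : ℕ} {x : ℝ} (hx : ∀ j ≤ i, 0 < log^[j] x) : 0 < iterLogProd i x :=
  prod_pos fun j hj => hx j (Nat.lt_succ_iff.1 (mem_range.1 hj))

lemma log_iterLogProd {i : ℕ} {x : ℝ} (hx : ∀ j ≤ i, 0 < log^[j] x) :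
    log (iterLogProd i x) = ∑ j ∈ range (i + 1), log^[j + 1] x := by
  rw [iterLogProd, log_prod fun j hj => (hx j (Nat.lt_succ_iff.1 (mem_range.1 hj))).ne']
  simp only [Function.iterate_succ_apply']

lemma iterLogProd_eq_mul_prod (i : ℕ) (x : ℝ) :
    iterLogProd i x = x * ∏ j ∈ range i, log^[j + 1] x := by
  rw [iterLogProd, prod_range_succ', Function.iterate_zero_apply, mul_comm]

lemma one_add_sum_inv_iterLogProd (K : ℕ) (x : ℝ) :
    1 + 1 / x + 1 / x * ∑ i ∈ Icc 1 K, 1 / ∏ j ∈ Icc 1 i, log^[j] x =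
      1 + ∑ i ∈ range (K + 1), (iterLogProd i x)⁻¹ := by
  simp only [iterLogProd_eq_mul_prod, sum_range_succ', sum_Icc_one_eq_sum_range,
    prod_Icc_one_eq_prod_range, mul_sum, mul_inv, one_div, prod_range_zero]
  ring

lemma iterate_log_sub_le {i : ℕ} {x y : ℝ} (hx : ∀ j ≤ i, 0 < log^[j] x)
    (hy : ∀ j ≤ i, 0 < log^[j] y) :
    log^[i + 1] y - log^[i + 1] x ≤ (y - x) / iterLogProd i x := by
  induction i with
  | zero => simpa [iterLogProd] using log_sub_log_le_sub_div (hx 0 le_rfl) (hy 0 le_rfl)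
  | succ i ih =>
    have ha := hx (i + 1) le_rfl
    calc log^[i + 2] y - log^[i + 2] x
        = log (log^[i + 1] y) - log (log^[i + 1] x) := by
          simp only [Function.iterate_succ_apply']
      _ ≤ (log^[i + 1] y - log^[i + 1] x) / log^[i + 1] x :=
          log_sub_log_le_sub_div ha (hy (i + 1) le_rfl)
      _ ≤ (y - x) / iterLogProd i x / log^[i + 1] x :=
          div_le_div_of_nonneg_right (ih (fun j hj => hx j (by omega))
            (fun j hj => hy j (by omega))) ha.le
      _ = (y - x) / iterLogProd (i + 1) x := by rw [iterLogProd_succ, div_div]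

lemma le_iterate_log_sub {i : ℕ} {x y : ℝ} (hx : ∀ j ≤ i, 0 < log^[j] x)
    (hy : ∀ j ≤ i, 0 < log^[j] y) :
    (y - x) / iterLogProd i y ≤ log^[i + 1] y - log^[i + 1] x := by
  induction i with
  | zero => simpa [iterLogProd] using sub_div_le_log_sub_log (hx 0 le_rfl) (hy 0 le_rfl)
  | succ i ih =>
    have hb := hy (i + 1) le_rfl
    calc (y - x) / iterLogProd (i + 1) y
        = (y - x) / iterLogProd i y / log^[i + 1] y := by rw [iterLogProd_succ, div_div]
      _ ≤ (log^[i + 1] y - log^[i + 1] x) / log^[i + 1] y :=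
          div_le_div_of_nonneg_right (ih (fun j hj => hx j (by omega))
            (fun j hj => hy j (by omega))) hb.le
      _ ≤ log (log^[i + 1] y) - log (log^[i + 1] x) :=
          sub_div_le_log_sub_log (hx (i + 1) le_rfl) hb
      _ = log^[i + 2] y - log^[i + 2] x := by
          simp only [Function.iterate_succ_apply']

lemma sum_inv_iterLogProd_nonneg {K : ℕ} {x : ℝ} (hx : ∀ j ≤ K, 0 < log^[j] x) :
    0 ≤ ∑ i ∈ range (K + 1), (iterLogProd i x)⁻¹ :=
  sum_nonneg fun _ hi => inv_nonneg.2 (iterLogProd_pos fun j hj =>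
    hx j (hj.trans (Nat.lt_succ_iff.1 (mem_range.1 hi)))).le

noncomputable def logPotential (K : ℕ) (x : ℝ) : ℝ :=
  log (iterLogProd K x) - ∑ i ∈ range (K + 1), (iterLogProd i x)⁻¹

lemma logPotential_sub_le_log_div {K : ℕ} {x a b : ℝ} (ha : 0 < a) (hb : 0 < b)
    (hx : ∀ j ≤ K, 0 < log^[j] x) (hx' : ∀ j ≤ K, 0 < log^[j] (x + 1))
    (hba : b / a ≤ 1 + ∑ i ∈ range (K + 1), (iterLogProd i x)⁻¹) :
    logPotential K x - logPotential K (x + 1) ≤ log (a / b) := by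
  have hincr : ∑ i ∈ range (K + 1), (iterLogProd i (x + 1))⁻¹ ≤
      log (iterLogProd K (x + 1)) - log (iterLogProd K x) := by
    rw [log_iterLogProd hx, log_iterLogProd hx', ← sum_sub_distrib]
    refine sum_le_sum fun i hi => ?_
    have hiK := Nat.lt_succ_iff.1 (mem_range.1 hi)
    simpa using le_iterate_log_sub (i := i) (x := x) (y := x + 1)
      (fun j hj => hx j (hj.trans hiK)) (fun j hj => hx' j (hj.trans hiK))
  have hlog : log (b / a) ≤ ∑ i ∈ range (K + 1), (iterLogProd i x)⁻¹ := by
    have hφ := sum_inv_iterLogProd_nonneg hx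
    linarith [log_le_log (div_pos hb ha) hba, log_le_sub_one_of_pos (by linarith : 0 < 1 +
      ∑ i ∈ range (K + 1), (iterLogProd i x)⁻¹)]
  rw [logPotential, logPotential, ← inv_div, log_inv]
  linarith

lemma iterate_log_sub_le_exp_neg_logPotential {K : ℕ} {x : ℝ} (hx : ∀ j ≤ K, 0 < log^[j] x)
    (hx' : ∀ j ≤ K, 0 < log^[j] (x + 1)) :
    log^[K + 1] (x + 1) - log^[K + 1] x ≤ exp (-logPotential K x) := by
  calc log^[K + 1] (x + 1) - log^[K + 1] x ≤ (x + 1 - x) / iterLogProd K x :=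
        iterate_log_sub_le hx hx'
    _ = (iterLogProd K x)⁻¹ := by rw [add_sub_cancel_left, one_div]
    _ ≤ exp (-logPotential K x) := by
        rw [logPotential, neg_sub, exp_sub, exp_log (iterLogProd_pos hx), div_eq_mul_inv]
        exact le_mul_of_one_le_left (inv_nonneg.2 (iterLogProd_pos hx).le)
          (one_le_exp (sum_inv_iterLogProd_nonneg hx))

lemma exists_mul_exp_neg_le_prod {r V : ℕ → ℝ} {N : ℕ} (hr : ∀ n, 0 < r n)
    (hV : ∀ n ≥ N, V n - V (n + 1) ≤ log (r n)) :
    ∃ c > 0, ∀ n ≥ N, c * exp (-V (n + 1)) ≤ ∏ k ∈ Icc 1 n, r k := by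
  have hprod : ∀ n, 0 < ∏ k ∈ Icc 1 n, r k := fun n => prod_pos fun k _ => hr k
  refine ⟨(∏ k ∈ Icc 1 N, r k) * exp (V (N + 1)), mul_pos (hprod N) (exp_pos _),
    fun n hn => ?_⟩
  rw [exp_neg, ← div_eq_mul_inv, div_le_iff₀ (exp_pos _)]
  induction n, hn using Nat.le_induction with
  | base => rfl
  | succ n hn ih =>
    have hstep : exp (V (n + 1)) ≤ r (n + 1) * exp (V (n + 2)) := by
      rw [← exp_log (hr (n + 1)), ← exp_add, exp_le_exp]
      linarith [hV (n + 1) (by omega)]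
    calc _ ≤ (∏ k ∈ Icc 1 n, r k) * exp (V (n + 1)) := ih
      _ ≤ (∏ k ∈ Icc 1 n, r k) * (r (n + 1) * exp (V (n + 2))) :=
          mul_le_mul_of_nonneg_left hstep (hprod n).le
      _ = (∏ k ∈ Icc 1 (n + 1), r k) * exp (V (n + 1 + 1)) := by
          rw [prod_Icc_succ_top (by omega), mul_assoc]

lemma tendsto_sum_Icc_atTop_of_sub_le {a G : ℕ → ℝ} {N : ℕ} (ha : ∀ n, 0 ≤ a n)
    (hG : Tendsto G atTop atTop) (hle : ∀ n ≥ N, G (n + 1) - G n ≤ a n) :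
    Tendsto (fun M => ∑ n ∈ Icc 1 M, a n) atTop atTop := by
  refine tendsto_atTop_mono' atTop ?_ (tendsto_atTop_add_const_right _ (-G (N + 1))
    (hG.comp (tendsto_add_atTop_nat 1)))
  filter_upwards [eventually_ge_atTop N] with M hM
  calc G (M + 1) + -G (N + 1) = ∑ n ∈ Ico (N + 1) (M + 1), (G (n + 1) - G n) := by
        rw [sum_Ico_sub _ (by omega)]; ring
    _ ≤ ∑ n ∈ Ico (N + 1) (M + 1), a n := sum_le_sum fun n hn => hle n (by simp at hn; omega)
    _ ≤ ∑ n ∈ Icc 1 M, a n := sum_le_sum_of_subset_of_nonneg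
        (fun n hn => by simp at hn ⊢; omega) fun n _ _ => ha n

theorem birth_death_recurrent_general
    (lam mu : ℕ → ℝ) (hlam : ∀ n, 0 < lam n) (hmu : ∀ n, 0 < mu n)
    (K : ℕ) (n₀ : ℕ)
    (h : ∀ n > n₀,
      lam n / mu n ≤
        1 + 1 / (n : ℝ)
          + (1 / (n : ℝ)) * ∑ i ∈ Finset.Icc 1 K,
              1 / ∏ j ∈ Finset.Icc 1 i, Real.log^[j] (n : ℝ)) :
    Filter.Tendsto
      (fun N : ℕ => ∑ n ∈ Finset.Icc 1 N, ∏ k ∈ Finset.Icc 1 n, mu k / lam k)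
      Filter.atTop Filter.atTop := by
  obtain ⟨N, hN⟩ := eventually_atTop.1 <| (tendsto_natCast_atTop_atTop.eventually
    (eventually_forall_le_iterate_log_pos K)).and (eventually_gt_atTop n₀)
  have hpos : ∀ n ≥ N, ∀ j ≤ K, 0 < log^[j] ((n : ℝ) + 1) := fun n hn => by
    exact_mod_cast (hN (n + 1) (by omega)).1
  have hV : ∀ n ≥ N, logPotential K n - logPotential K ((n + 1 : ℕ) : ℝ) ≤
      log (mu n / lam n) := fun n hn => by
    push_cast
    exact logPotential_sub_le_log_div (hmu n) (hlam n) (hN n hn).1 (hpos n hn)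
      ((h n (hN n hn).2).trans_eq (one_add_sum_inv_iterLogProd K n))
  obtain ⟨c, hc, hprod⟩ := exists_mul_exp_neg_le_prod (fun n => div_pos (hmu n) (hlam n)) hV
  refine tendsto_sum_Icc_atTop_of_sub_le (G := fun n : ℕ => c * log^[K + 1] ((n : ℝ) + 1))
    (N := N) (fun n => (prod_pos fun k _ => div_pos (hmu k) (hlam k)).le)
    (Tendsto.const_mul_atTop hc ((tendsto_log_atTop.iterate _).comp
      (tendsto_atTop_add_const_right _ 1 tendsto_natCast_atTop_atTop))) fun n hn => ?_
  rw [← mul_sub, Nat.cast_succ]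
  exact (mul_le_mul_of_nonneg_left (iterate_log_sub_le_exp_neg_logPotential (hpos n hn)
    (by exact_mod_cast hpos (n + 1) (by omega))) hc.le).trans (by exact_mod_cast hprod n hn)

/-- **Series form of the recurrence criterion for birth-and-death processes.**
The series `∑_{n=1}^∞ ∏_{k=1}^n μ_k/λ_k` diverges to `∞`, stated as: the partial
sums tend to infinity. Here `Real.log^[k]` is the `k`-th iterate of `Real.log`. -/
theorem birth_death_recurrent
    (lam mu : ℕ → ℝ) (hlam : ∀ n, 0 < lam n) (hmu : ∀ n, 0 < mu n)
    (K : ℕ) (hK : 1 ≤ K) (n₀ : ℕ)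
    (h : ∀ n > n₀,
      lam n / mu n ≤
        1 + 1 / (n : ℝ)
          + (1 / (n : ℝ)) * ∑ i ∈ Finset.Icc 1 K,
              1 / ∏ j ∈ Finset.Icc 1 i, Real.log^[j] (n : ℝ)) :
    Filter.Tendsto
      (fun N : ℕ => ∑ n ∈ Finset.Icc 1 N, ∏ k ∈ Finset.Icc 1 n, mu k / lam k)
      Filter.atTop Filter.atTop :=
  birth_death_recurrent_general lam mu hlam hmu K n₀ h
end
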